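/- Let A = ℂ[b_1, b_2, q_1, q_2]/(𝓡_1, 𝓡_2) with 𝓡_1 = b_1^2 + b_2^2 − b_1 b_2 − q_1 − q_2 and 𝓡_2 = b_1 b_2^2 − b_1^2 b_2 + q_1 b_2 − q_2 b_1, let H = ℂ[b_1, b_2]/(b_1^2 + b_2^2 − b_1 b_2, b_1 b_2^2 − b_1^2 b_2), and let B = H[q_1, q_2] be the polynomial ring in q_1, q_2 over H; for c ∈ ℂ[b_1, b_2] write [[c]] for its class in H ⊆ B. Then: (i) the classes in A of the six polynomials ĉ_0 = 1, ĉ_1 = b_2, ĉ_2 = b_1, ĉ_3 = b_2^2 − q_2, ĉ_4 = b_2 b_1, ĉ_5 = b_2^2 b_1 − q_2 b_1 form a basis of A as a ℂ[q_1, q_2]-module; (ii) the unique ℂ[q_1, q_2]-linear map δ̂ : A → B sending the class of ĉ_i to [[c_i]], where c_0, …, c_5 = 1, b_2, b_1, b_2^2, b_2 b_1, b_2^2 b_1, is a ℂ[q_1, q_2]-module isomorphism; and (iii) δ̂ satisfies δ̂([b_2^2]) = [[b_2^2]] + q_2, δ̂([b_2 b_1]) = [[b_2 b_1]], and δ̂([b_2^2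 b_1]) = [[b_2^2 b_1]] + q_2 [[b_1]]. Consequently, for the product x ∘ y := δ̂(δ̂^{−1}(x) · δ̂^{−1}(y)) on B, one has [[b_2]] ∘ [[b_2]] = [[b_2^2]] + q_2, [[b_2]] ∘ [[b_1]] = [[b_2 b_1]], and [[b_2]] ∘ [[b_2]] ∘ [[b_1]] = [[b_2^2 b_1]] + q_2 [[b_1]]. -/

import Mathlib

set_option maxHeartbeats 1000000
set_option synthInstance.maxHeartbeats 1000000


open MvPolynomial

noncomputable section

/-- The polynomial ring `ℂ[b₁, b₂, q₁, q₂]`, with `b₁ = X 0`, `b₂ = X 1`,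
`q₁ = X 2`, `q₂ = X 3`. -/
abbrev R4 : Type := MvPolynomial (Fin 4) ℂ

/-- `𝓡₁ = b₁² + b₂² - b₁b₂ - q₁ - q₂`. -/
def Rel1 : R4 := X 0 ^ 2 + X 1 ^ 2 - X 0 * X 1 - X 2 - X 3

/-- `𝓡₂ = b₁b₂² - b₁²b₂ + q₁b₂ - q₂b₁`. -/
def Rel2 : R4 := X 0 * X 1 ^ 2 - X 0 ^ 2 * X 1 + X 2 * X 1 - X 3 * X 0

/-- The quantum cohomology ring `A = ℂ[b₁, b₂, q₁, q₂]/(𝓡₁, 𝓡₂)`. -/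
abbrev QH3 : Type := R4 ⧸ Ideal.span {Rel1, Rel2}

/-- The quotient map `ℂ[b₁, b₂, q₁, q₂] → A`. -/
def mk3 : R4 →+* QH3 := Ideal.Quotient.mk _

/-- The coefficient ring `ℂ[q₁, q₂]` (with `q₁ = X 0`, `q₂ = X 1`). -/
abbrev S2 : Type := MvPolynomial (Fin 2) ℂ

/-- The natural map `ℂ[q₁, q₂] → A`. -/
def structMap : S2 →+* QH3 :=
  MvPolynomial.eval₂Hom (mk3.comp MvPolynomial.C) ![mk3 (X 2), mk3 (X 3)]

instance : Module S2 QH3 := Module.compHom _ structMap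

/-- The polynomial ring `ℂ[b₁, b₂]`, with `b₁ = X 0`, `b₂ = X 1`. -/
abbrev P2 : Type := MvPolynomial (Fin 2) ℂ

/-- The ordinary cohomology ring `H = ℂ[b₁, b₂]/(b₁² + b₂² - b₁b₂, b₁b₂² - b₁²b₂)`. -/
abbrev H3 : Type :=
  P2 ⧸ Ideal.span {(X 0 ^ 2 + X 1 ^ 2 - X 0 * X 1 : P2),
                   (X 0 * X 1 ^ 2 - X 0 ^ 2 * X 1 : P2)}

/-- The quotient map `ℂ[b₁, b₂] → H`. -/
def mkH : P2 →+* H3 := Ideal.Quotient.mk _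

/-- `B = H[q₁, q₂]`, with `q₁ = X 0`, `q₂ = X 1`. -/
abbrev B3 : Type := MvPolynomial (Fin 2) H3

/-- `[[c]]`: the class in `H ⊆ B` of a polynomial `c ∈ ℂ[b₁, b₂]`. -/
def cc (c : P2) : B3 := MvPolynomial.C (mkH c)

/-- The natural map `ℂ[q₁, q₂] → B = H[q₁, q₂]` (coefficientwise `ℂ → H`). -/
def structMapB : S2 →+* B3 := MvPolynomial.map (mkH.comp MvPolynomial.C)

set_option synthInstance.maxHeartbeats 1000000 in
instance : Module S2 B3 := Module.compHom _ structMapB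

/-- The polynomials `ĉ₀ = 1, ĉ₁ = b₂, ĉ₂ = b₁, ĉ₃ = b₂² - q₂, ĉ₄ = b₂b₁,
`ĉ₅ = b₂²b₁ - q₂b₁` in `ℂ[b₁, b₂, q₁, q₂]`. -/
def chat : Fin 6 → R4 :=
  ![1, X 1, X 0, X 1 ^ 2 - X 3, X 1 * X 0, X 1 ^ 2 * X 0 - X 3 * X 0]

/-- The monomials `c₀, …, c₅ = 1, b₂, b₁, b₂², b₂b₁, b₂²b₁` in `ℂ[b₁, b₂]`. -/
def cpoly : Fin 6 → P2 :=
  ![1, X 1, X 0, X 1 ^ 2, X 1 * X 0, X 1 ^ 2 * X 0]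

@[ext] structure Q6 (R : Type) [CommRing R] (u v : R) where
  x0 : R
  x1 : R
  x2 : R
  x3 : R
  x4 : R
  x5 : R

namespace Q6

variable {R : Type} [CommRing R] {u v : R}

instance : Zero (Q6 R u v) := ⟨⟨0,0,0,0,0,0⟩⟩
instance : One (Q6 R u v) := ⟨⟨1,0,0,0,0,0⟩⟩
instance : Add (Q6 R u v) := ⟨fun x y => ⟨x.x0+y.x0, x.x1+y.x1, x.x2+y.x2, x.x3+y.x3, x.x4+y.x4, x.x5+y.x5⟩⟩
instance : Neg (Q6 R u v) := ⟨fun x => ⟨-x.x0, -x.x1, -x.x2, -x.x3, -x.x4, -x.x5⟩⟩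
instance : Mul (Q6 R u v) :=
  ⟨fun x y =>
    ⟨x.x0*y.x0 + v*x.x1*y.x1 + u*x.x2*y.x2 + u*v*(x.x1*y.x5+x.x5*y.x1) + u*v*(x.x2*y.x5+x.x5*y.x2)
        + u*v*(x.x3*y.x4+x.x4*y.x3) + 2*u*v*x.x4*y.x4,
     x.x0*y.x1+x.x1*y.x0 + u*(x.x2*y.x4+x.x4*y.x2) + u*v*(x.x3*y.x5+x.x5*y.x3) + u*v*(x.x4*y.x5+x.x5*y.x4),
     x.x0*y.x2+x.x2*y.x0 + v*(x.x1*y.x3+x.x3*y.x1) + v*(x.x1*y.x4+x.x4*y.x1) + u*v*(x.x4*y.x5+x.x5*y.x4),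
     x.x0*y.x3+x.x3*y.x0 + x.x1*y.x1 - x.x2*y.x2 + u*(x.x2*y.x5+x.x5*y.x2) - v*x.x3*y.x3
        - v*(x.x1*y.x5+x.x5*y.x1) - v*(x.x3*y.x4+x.x4*y.x3) + (u-v)*x.x4*y.x4,
     x.x0*y.x4+x.x4*y.x0 + x.x1*y.x2+x.x2*y.x1 + x.x2*y.x2 + v*(x.x1*y.x5+x.x5*y.x1) + v*x.x3*y.x3
        + v*(x.x3*y.x4+x.x4*y.x3) + v*x.x4*y.x4 + u*v*x.x5*y.x5,
     x.x0*y.x5+x.x5*y.x0 + x.x1*y.x4+x.x4*y.x1 + x.x2*y.x3+x.x3*y.x2 + x.x2*y.x4+x.x4*y.x2⟩⟩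

@[simp] lemma zero_x0 : (0 : Q6 R u v).x0 = 0 := rfl
@[simp] lemma zero_x1 : (0 : Q6 R u v).x1 = 0 := rfl
@[simp] lemma zero_x2 : (0 : Q6 R u v).x2 = 0 := rfl
@[simp] lemma zero_x3 : (0 : Q6 R u v).x3 = 0 := rfl
@[simp] lemma zero_x4 : (0 : Q6 R u v).x4 = 0 := rfl
@[simp] lemma zero_x5 : (0 : Q6 R u v).x5 = 0 := rfl
@[simp] lemma one_x0 : (1 : Q6 R u v).x0 = 1 := rfl
@[simp] lemma one_x1 : (1 : Q6 R u v).x1 = 0 := rfl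
@[simp] lemma one_x2 : (1 : Q6 R u v).x2 = 0 := rfl
@[simp] lemma one_x3 : (1 : Q6 R u v).x3 = 0 := rfl
@[simp] lemma one_x4 : (1 : Q6 R u v).x4 = 0 := rfl
@[simp] lemma one_x5 : (1 : Q6 R u v).x5 = 0 := rfl
@[simp] lemma add_x0 (x y : Q6 R u v) : (x+y).x0 = x.x0 + y.x0 := rfl
@[simp] lemma add_x1 (x y : Q6 R u v) : (x+y).x1 = x.x1 + y.x1 := rfl
@[simp] lemma add_x2 (x y : Q6 R u v) : (x+y).x2 = x.x2 + y.x2 := rfl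
@[simp] lemma add_x3 (x y : Q6 R u v) : (x+y).x3 = x.x3 + y.x3 := rfl
@[simp] lemma add_x4 (x y : Q6 R u v) : (x+y).x4 = x.x4 + y.x4 := rfl
@[simp] lemma add_x5 (x y : Q6 R u v) : (x+y).x5 = x.x5 + y.x5 := rfl
@[simp] lemma neg_x0 (x : Q6 R u v) : (-x).x0 = -x.x0 := rfl
@[simp] lemma neg_x1 (x : Q6 R u v) : (-x).x1 = -x.x1 := rfl
@[simp] lemma neg_x2 (x : Q6 R u v) : (-x).x2 = -x.x2 := rfl
@[simp] lemma neg_x3 (x : Q6 R u v) : (-x).x3 = -x.x3 := rfl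
@[simp] lemma neg_x4 (x : Q6 R u v) : (-x).x4 = -x.x4 := rfl
@[simp] lemma neg_x5 (x : Q6 R u v) : (-x).x5 = -x.x5 := rfl
@[simp] lemma mul_x0 (x y : Q6 R u v) : (x*y).x0 = x.x0*y.x0 + v*x.x1*y.x1 + u*x.x2*y.x2 + u*v*(x.x1*y.x5+x.x5*y.x1) + u*v*(x.x2*y.x5+x.x5*y.x2) + u*v*(x.x3*y.x4+x.x4*y.x3) + 2*u*v*x.x4*y.x4 := rfl
@[simp] lemma mul_x1 (x y : Q6 R u v) : (x*y).x1 = x.x0*y.x1+x.x1*y.x0 + u*(x.x2*y.x4+x.x4*y.x2) + u*v*(x.x3*y.x5+x.x5*y.x3) + u*v*(x.x4*y.x5+x.x5*y.x4) := rfl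
@[simp] lemma mul_x2 (x y : Q6 R u v) : (x*y).x2 = x.x0*y.x2+x.x2*y.x0 + v*(x.x1*y.x3+x.x3*y.x1) + v*(x.x1*y.x4+x.x4*y.x1) + u*v*(x.x4*y.x5+x.x5*y.x4) := rfl
@[simp] lemma mul_x3 (x y : Q6 R u v) : (x*y).x3 = x.x0*y.x3+x.x3*y.x0 + x.x1*y.x1 - x.x2*y.x2 + u*(x.x2*y.x5+x.x5*y.x2) - v*x.x3*y.x3 - v*(x.x1*y.x5+x.x5*y.x1) - v*(x.x3*y.x4+x.x4*y.x3) + (u-v)*x.x4*y.x4 := rfl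
@[simp] lemma mul_x4 (x y : Q6 R u v) : (x*y).x4 = x.x0*y.x4+x.x4*y.x0 + x.x1*y.x2+x.x2*y.x1 + x.x2*y.x2 + v*(x.x1*y.x5+x.x5*y.x1) + v*x.x3*y.x3 + v*(x.x3*y.x4+x.x4*y.x3) + v*x.x4*y.x4 + u*v*x.x5*y.x5 := rfl
@[simp] lemma mul_x5 (x y : Q6 R u v) : (x*y).x5 = x.x0*y.x5+x.x5*y.x0 + x.x1*y.x4+x.x4*y.x1 + x.x2*y.x3+x.x3*y.x2 + x.x2*y.x4+x.x4*y.x2 := rfl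

set_option maxHeartbeats 4000000 in
set_option maxHeartbeats 4000000 in
instance instCommRing : CommRing (Q6 R u v) where
  add_assoc a b c := by ext <;> simp <;> ring
  zero_add a := by ext <;> simp
  add_zero a := by ext <;> simp
  add_comm a b := by ext <;> simp <;> ring
  neg_add_cancel a := by ext <;> simp
  left_distrib a b c := by ext <;> simp <;> ring
  right_distrib a b c := by ext <;> simp <;> ring
  zero_mul a := by ext <;> simp
  mul_zero a := by ext <;> simp
  mul_assoc a b c := by ext <;> simp <;> ring
  one_mul a := by ext <;> simp
  mul_one a := by ext <;> simp
  mul_comm a b := by ext <;> simp <;> ring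
  nsmul := nsmulRec
  zsmul := zsmulRec

@[simp] lemma sub_x0 (x y : Q6 R u v) : (x-y).x0 = x.x0 - y.x0 := by
  simp [sub_eq_add_neg]
@[simp] lemma sub_x1 (x y : Q6 R u v) : (x-y).x1 = x.x1 - y.x1 := by
  simp [sub_eq_add_neg]
@[simp] lemma sub_x2 (x y : Q6 R u v) : (x-y).x2 = x.x2 - y.x2 := by
  simp [sub_eq_add_neg]
@[simp] lemma sub_x3 (x y : Q6 R u v) : (x-y).x3 = x.x3 - y.x3 := by
  simp [sub_eq_add_neg]
@[simp] lemma sub_x4 (x y : Q6 R u v) : (x-y).x4 = x.x4 - y.x4 := by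
  simp [sub_eq_add_neg]
@[simp] lemma sub_x5 (x y : Q6 R u v) : (x-y).x5 = x.x5 - y.x5 := by
  simp [sub_eq_add_neg]

/-- The structure map `R → Q6 R u v`. -/
def ι : R →+* Q6 R u v where
  toFun r := ⟨r, 0, 0, 0, 0, 0⟩
  map_one' := rfl
  map_zero' := rfl
  map_add' a b := by ext <;> simp
  map_mul' a b := by ext <;> simp

@[simp] lemma ι_x0 (r : R) : (ι (u := u) (v := v) r).x0 = r := rfl
@[simp] lemma ι_x1 (r : R) : (ι (u := u) (v := v) r).x1 = 0 := rfl
@[simp] lemma ι_x2 (r : R) : (ι (u := u) (v := v) r).x2 = 0 := rfl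
@[simp] lemma ι_x3 (r : R) : (ι (u := u) (v := v) r).x3 = 0 := rfl
@[simp] lemma ι_x4 (r : R) : (ι (u := u) (v := v) r).x4 = 0 := rfl
@[simp] lemma ι_x5 (r : R) : (ι (u := u) (v := v) r).x5 = 0 := rfl

instance : Module R (Q6 R u v) := Module.compHom _ (ι (u := u) (v := v))

lemma smul_def (r : R) (x : Q6 R u v) : r • x = ι r * x := rfl

@[simp] lemma smul_x0 (r : R) (x : Q6 R u v) : (r • x).x0 = r * x.x0 := by
  rw [smul_def]; simp
@[simp] lemma smul_x1 (r : R) (x : Q6 R u v) : (r • x).x1 = r * x.x1 := by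
  rw [smul_def]; simp
@[simp] lemma smul_x2 (r : R) (x : Q6 R u v) : (r • x).x2 = r * x.x2 := by
  rw [smul_def]; simp
@[simp] lemma smul_x3 (r : R) (x : Q6 R u v) : (r • x).x3 = r * x.x3 := by
  rw [smul_def]; simp
@[simp] lemma smul_x4 (r : R) (x : Q6 R u v) : (r • x).x4 = r * x.x4 := by
  rw [smul_def]; simp
@[simp] lemma smul_x5 (r : R) (x : Q6 R u v) : (r • x).x5 = r * x.x5 := by
  rw [smul_def]; simp

/-- Coordinates as a linear equivalence with `Fin 6 → R`. -/
def coords : Q6 R u v ≃ₗ[R] (Fin 6 → R) where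
  toFun x := ![x.x0, x.x1, x.x2, x.x3, x.x4, x.x5]
  invFun f := ⟨f 0, f 1, f 2, f 3, f 4, f 5⟩
  left_inv x := by ext <;> rfl
  right_inv f := by funext i; fin_cases i <;> rfl
  map_add' x y := by funext i; fin_cases i <;> rfl
  map_smul' r x := by
    funext i
    fin_cases i
    · show (r • x).x0 = r * x.x0; simp
    · show (r • x).x1 = r * x.x1; simp
    · show (r • x).x2 = r * x.x2; simp
    · show (r • x).x3 = r * x.x3; simp
    · show (r • x).x4 = r * x.x4; simp
    · show (r • x).x5 = r * x.x5; simp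

end Q6



-- ============ quantum side ============

@[simp] lemma chat_0 : chat 0 = 1 := rfl
@[simp] lemma chat_1 : chat 1 = X 1 := rfl
@[simp] lemma chat_2 : chat 2 = X 0 := rfl
@[simp] lemma chat_3 : chat 3 = X 1 ^ 2 - X 3 := rfl
@[simp] lemma chat_4 : chat 4 = X 1 * X 0 := rfl
@[simp] lemma chat_5 : chat 5 = X 1 ^ 2 * X 0 - X 3 * X 0 := rfl

@[simp] lemma cpoly_0 : cpoly 0 = 1 := rfl
@[simp] lemma cpoly_1 : cpoly 1 = X 1 := rfl
@[simp] lemma cpoly_2 : cpoly 2 = X 0 := rfl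
@[simp] lemma cpoly_3 : cpoly 3 = X 1 ^ 2 := rfl
@[simp] lemma cpoly_4 : cpoly 4 = X 1 * X 0 := rfl
@[simp] lemma cpoly_5 : cpoly 5 = X 1 ^ 2 * X 0 := rfl

abbrev Tq : Type := Q6 S2 (X 0) (X 1)

def φq : R4 →+* Tq :=
  eval₂Hom ((Q6.ι : S2 →+* Tq).comp MvPolynomial.C)
    ![⟨0,0,1,0,0,0⟩, ⟨0,1,0,0,0,0⟩, Q6.ι (X 0), Q6.ι (X 1)]

lemma φq_X0 : φq (X 0) = (⟨0,0,1,0,0,0⟩ : Tq) := by simp [φq]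
lemma φq_X1 : φq (X 1) = (⟨0,1,0,0,0,0⟩ : Tq) := by simp [φq]
lemma φq_X2 : φq (X 2) = Q6.ι (X 0) := by simp [φq]
lemma φq_X3 : φq (X 3) = Q6.ι (X 1) := by simp [φq]

lemma φq_Rel1 : φq Rel1 = 0 := by
  simp only [Rel1, map_sub, map_add, map_pow, map_mul, φq_X0, φq_X1, φq_X2, φq_X3]
  apply Q6.ext <;> (simp [pow_two]; try ring)

lemma φq_Rel2 : φq Rel2 = 0 := by
  simp only [Rel2, map_sub, map_add, map_pow, map_mul, φq_X0, φq_X1, φq_X2, φq_X3]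
  apply Q6.ext <;> (simp [pow_two]; try ring)

def πq : QH3 →+* Tq :=
  Ideal.Quotient.lift _ φq (by
    intro a ha
    have h : Ideal.span {Rel1, Rel2} ≤ RingHom.ker φq := by
      rw [Ideal.span_le]
      rintro x hx
      simp only [Set.mem_insert_iff, Set.mem_singleton_iff] at hx
      rcases hx with rfl | rfl
      · exact RingHom.mem_ker.mpr φq_Rel1
      · exact RingHom.mem_ker.mpr φq_Rel2
    exact RingHom.mem_ker.mp (h ha))

@[simp] lemma πq_mk3 (p : R4) : πq (mk3 p) = φq p := rfl

lemma smul_mk3 (s : S2) (x : QH3) : s • x = structMap s * x := rfl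

/-- `ℂ[q₁,q₂] → ℂ[b₁,b₂,q₁,q₂]`. -/
def liftQ : S2 →+* R4 := eval₂Hom MvPolynomial.C ![X 2, X 3]

@[simp] lemma liftQ_X0 : liftQ (X 0) = X 2 := by simp [liftQ]
@[simp] lemma liftQ_X1 : liftQ (X 1) = X 3 := by simp [liftQ]

lemma structMap_eq (s : S2) : structMap s = mk3 (liftQ s) := by
  have : structMap = mk3.comp liftQ := by
    apply MvPolynomial.ringHom_ext
    · intro a; simp [structMap, liftQ, mk3]
    · intro i; fin_cases i <;> simp [structMap, liftQ, mk3]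
  rw [this]; rfl

lemma smul_mk3' (s : S2) (p : R4) : s • mk3 p = mk3 (liftQ s * p) := by
  rw [smul_mk3, structMap_eq, map_mul]

lemma πq_structMap (s : S2) : πq (structMap s) = Q6.ι s := by
  have : πq.comp structMap = (Q6.ι : S2 →+* Tq) := by
    apply MvPolynomial.ringHom_ext
    · intro a
      simp [structMap, πq, mk3, φq]
    · intro i
      fin_cases i <;> simp [structMap, πq, mk3, φq]
  exact RingHom.congr_fun this s

def πlin : QH3 →ₗ[S2] Tq where
  toFun := πq
  map_add' := map_add _
  map_smul' s x := by
    simp only [RingHom.id_apply]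
    rw [smul_mk3, map_mul, πq_structMap, ← Q6.smul_def]

@[simp] lemma πlin_apply (x : QH3) : πlin x = πq x := rfl

def σq : Tq →ₗ[S2] QH3 where
  toFun t := t.x0 • mk3 (chat 0) + t.x1 • mk3 (chat 1) + t.x2 • mk3 (chat 2)
    + t.x3 • mk3 (chat 3) + t.x4 • mk3 (chat 4) + t.x5 • mk3 (chat 5)
  map_add' x y := by
    simp only [Q6.add_x0, Q6.add_x1, Q6.add_x2, Q6.add_x3, Q6.add_x4, Q6.add_x5, add_smul]
    abel
  map_smul' s x := by
    simp only [Q6.smul_x0, Q6.smul_x1, Q6.smul_x2, Q6.smul_x3, Q6.smul_x4, Q6.smul_x5,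
      RingHom.id_apply, mul_smul, smul_add]

-- images of the basis elements
lemma πq_chat0 : πq (mk3 (chat 0)) = 1 := by simp
lemma πq_chat1 : πq (mk3 (chat 1)) = (⟨0,1,0,0,0,0⟩ : Tq) := by simp [φq_X1]
lemma πq_chat2 : πq (mk3 (chat 2)) = (⟨0,0,1,0,0,0⟩ : Tq) := by simp [φq_X0]
lemma πq_chat3 : πq (mk3 (chat 3)) = (⟨0,0,0,1,0,0⟩ : Tq) := by
  simp only [πq_mk3, chat_3, map_sub, map_pow, φq_X1, φq_X3]
  apply Q6.ext <;> (simp [pow_two]; try ring)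
lemma πq_chat4 : πq (mk3 (chat 4)) = (⟨0,0,0,0,1,0⟩ : Tq) := by
  simp only [πq_mk3, chat_4, map_mul, φq_X1, φq_X0]
  apply Q6.ext <;> (simp; try ring)
lemma πq_chat5 : πq (mk3 (chat 5)) = (⟨0,0,0,0,0,1⟩ : Tq) := by
  simp only [πq_mk3, chat_5, map_sub, map_mul, map_pow, φq_X1, φq_X0, φq_X3]
  apply Q6.ext <;> (simp [pow_two]; try ring)

-- the span of the classes of the chat's
def Nq : Submodule S2 QH3 := Submodule.span S2 (Set.range fun i : Fin 6 => mk3 (chat i))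

lemma chat_mem (i : Fin 6) : mk3 (chat i) ∈ Nq := Submodule.subset_span ⟨i, rfl⟩

lemma mk3_eq (p c : R4) (a b : R4) (h : p - c = a * Rel1 + b * Rel2) : mk3 p = mk3 c :=
  Ideal.Quotient.eq.mpr (h ▸ Ideal.mem_span_pair.mpr ⟨a, b, rfl⟩)

lemma smul_mul_q (a : S2) (x y : QH3) : (a • x) * y = a • (x * y) := by
  rw [smul_mk3, smul_mk3, mul_assoc]

lemma mul_gen_mem (v : Fin 2) : ∀ x ∈ Nq, x * mk3 (X v.castSucc.castSucc) ∈ Nq := by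
  intro x hx
  refine Submodule.span_induction ?_ ?_ ?_ ?_ hx
  · rintro y ⟨i, rfl⟩
    fin_cases v
    · -- multiplication by b₁ = X 0
      show mk3 (chat i) * mk3 (X 0) ∈ Nq
      rw [← map_mul]
      fin_cases i
      · show mk3 (chat 0 * X 0) ∈ Nq
        rw [show (chat 0 * X 0 : R4) = chat 2 by simp; try ring]; exact chat_mem 2
      · show mk3 (chat 1 * X 0) ∈ Nq
        rw [show (chat 1 * X 0 : R4) = chat 4 by simp]; exact chat_mem 4
      · show mk3 (chat 2 * X 0) ∈ Nq
        have : mk3 (chat 2 * X 0) =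
            mk3 (chat 4) - mk3 (chat 3) + (X 0 : S2) • mk3 (chat 0) := by
          rw [smul_mk3', ← map_sub, ← map_add]
          exact mk3_eq _ _ 1 0 (by simp [Rel1, Rel2]; ring)
        rw [this]
        exact add_mem (sub_mem (chat_mem 4) (chat_mem 3))
          (Submodule.smul_mem _ _ (chat_mem 0))
      · show mk3 (chat 3 * X 0) ∈ Nq
        rw [show (chat 3 * X 0 : R4) = chat 5 by simp; try ring]; exact chat_mem 5
      · show mk3 (chat 4 * X 0) ∈ Nq
        have : mk3 (chat 4 * X 0) = mk3 (chat 5) + (X 0 : S2) • mk3 (chat 1) := by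
          rw [smul_mk3', ← map_add]
          exact mk3_eq _ _ 0 (-1) (by simp [Rel1, Rel2]; ring)
        rw [this]
        exact add_mem (chat_mem 5) (Submodule.smul_mem _ _ (chat_mem 1))
      · show mk3 (chat 5 * X 0) ∈ Nq
        have : mk3 (chat 5 * X 0) =
            (X 0 : S2) • mk3 (chat 3) + (X 0 * X 1 : S2) • mk3 (chat 0) := by
          rw [smul_mk3', smul_mk3', ← map_add]
          exact mk3_eq _ _ (X 0 * X 1) (X 0 - X 1) (by simp [Rel1, Rel2, map_mul]; ring)
        rw [this]
        exact add_mem (Submodule.smul_mem _ _ (chat_mem 3))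
          (Submodule.smul_mem _ _ (chat_mem 0))
    · -- multiplication by b₂ = X 1
      show mk3 (chat i) * mk3 (X 1) ∈ Nq
      rw [← map_mul]
      fin_cases i
      · show mk3 (chat 0 * X 1) ∈ Nq
        rw [show (chat 0 * X 1 : R4) = chat 1 by simp; try ring]; exact chat_mem 1
      · show mk3 (chat 1 * X 1) ∈ Nq
        have : mk3 (chat 1 * X 1) = mk3 (chat 3) + (X 1 : S2) • mk3 (chat 0) := by
          rw [smul_mk3', ← map_add]
          exact mk3_eq _ _ 0 0 (by simp [Rel1, Rel2]; ring)
        rw [this]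
        exact add_mem (chat_mem 3) (Submodule.smul_mem _ _ (chat_mem 0))
      · show mk3 (chat 2 * X 1) ∈ Nq
        rw [show (chat 2 * X 1 : R4) = chat 4 by simp; try ring]; exact chat_mem 4
      · show mk3 (chat 3 * X 1) ∈ Nq
        have : mk3 (chat 3 * X 1) = (X 1 : S2) • mk3 (chat 2) := by
          rw [smul_mk3']
          exact mk3_eq _ _ (X 1) 1 (by simp [Rel1, Rel2]; ring)
        rw [this]
        exact Submodule.smul_mem _ _ (chat_mem 2)
      · show mk3 (chat 4 * X 1) ∈ Nq
        have : mk3 (chat 4 * X 1) = mk3 (chat 5) + (X 1 : S2) • mk3 (chat 2) := by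
          rw [smul_mk3', ← map_add]
          exact mk3_eq _ _ 0 0 (by simp [Rel1, Rel2]; ring)
        rw [this]
        exact add_mem (chat_mem 5) (Submodule.smul_mem _ _ (chat_mem 2))
      · show mk3 (chat 5 * X 1) ∈ Nq
        have : mk3 (chat 5 * X 1) = (X 1 : S2) • mk3 (chat 4) - (X 1 : S2) • mk3 (chat 3)
            + (X 0 * X 1 : S2) • mk3 (chat 0) := by
          rw [smul_mk3', smul_mk3', smul_mk3', ← map_sub, ← map_add]
          exact mk3_eq _ _ (X 3 + X 0 * X 1) (X 0) (by simp [Rel1, Rel2, map_mul]; ring)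
        rw [this]
        exact add_mem (sub_mem (Submodule.smul_mem _ _ (chat_mem 4))
          (Submodule.smul_mem _ _ (chat_mem 3))) (Submodule.smul_mem _ _ (chat_mem 0))
  · simp
  · intro a b _ _ ha hb; rw [add_mul]; exact add_mem ha hb
  · intro a y _ hy; rw [smul_mul_q]; exact Submodule.smul_mem _ _ hy

lemma Nq_top : Nq = ⊤ := by
  rw [eq_top_iff]
  rintro x -
  obtain ⟨p, rfl⟩ := Ideal.Quotient.mk_surjective x
  show mk3 p ∈ Nq
  induction p using MvPolynomial.induction_on with
  | C a =>
      have : mk3 (MvPolynomial.C a) = (MvPolynomial.C a : S2) • mk3 (chat 0) := by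
        rw [smul_mk3', chat_0, mul_one]
        congr 1
        simp [liftQ]
  
      rw [this]
      exact Submodule.smul_mem _ _ (chat_mem 0)
  | add p q hp hq => rw [map_add]; exact add_mem hp hq
  | mul_X p i hp =>
      rw [map_mul]
      fin_cases i
      · exact mul_gen_mem 0 _ hp
      · exact mul_gen_mem 1 _ hp
      · show mk3 p * mk3 (X 2) ∈ Nq
        have : mk3 p * mk3 (X 2) = (X 0 : S2) • mk3 p := by
          rw [smul_mk3', map_mul, liftQ_X0, mul_comm]
        rw [this]; exact Submodule.smul_mem _ _ hp
      · show mk3 p * mk3 (X 3) ∈ Nq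
        have : mk3 p * mk3 (X 3) = (X 1 : S2) • mk3 p := by
          rw [smul_mk3', map_mul, liftQ_X1, mul_comm]
        rw [this]; exact Submodule.smul_mem _ _ hp

lemma pi_sigma_q : πlin.comp σq = LinearMap.id := by
  apply LinearMap.ext
  intro t
  simp only [LinearMap.comp_apply, LinearMap.id_apply, σq, LinearMap.coe_mk, AddHom.coe_mk,
    map_add, map_smul, πlin_apply, πq_chat0, πq_chat1, πq_chat2, πq_chat3, πq_chat4, πq_chat5]
  apply Q6.ext <;> (simp; try ring)

lemma sigma_pi_q : σq.comp πlin = LinearMap.id := by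
  apply LinearMap.ext_on (R := S2) Nq_top
  rintro _ ⟨i, rfl⟩
  show σq (πq (mk3 (chat i))) = mk3 (chat i)
  fin_cases i
  · show σq (πq (mk3 (chat 0))) = mk3 (chat 0); rw [πq_chat0]; simp [σq]
  · show σq (πq (mk3 (chat 1))) = mk3 (chat 1); rw [πq_chat1]; simp [σq]
  · show σq (πq (mk3 (chat 2))) = mk3 (chat 2); rw [πq_chat2]; simp [σq]
  · show σq (πq (mk3 (chat 3))) = mk3 (chat 3); rw [πq_chat3]; simp [σq]
  · show σq (πq (mk3 (chat 4))) = mk3 (chat 4); rw [πq_chat4]; simp [σq]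
  · show σq (πq (mk3 (chat 5))) = mk3 (chat 5); rw [πq_chat5]; simp [σq]

/-- `T ≃ A` as `ℂ[q₁,q₂]`-modules. -/
def EQt : Tq ≃ₗ[S2] QH3 := LinearEquiv.ofLinear σq πlin sigma_pi_q pi_sigma_q

@[simp] lemma EQt_apply (t : Tq) : EQt t = σq t := rfl
@[simp] lemma EQt_symm_apply (x : QH3) : EQt.symm x = πq x := rfl

/-- The basis of `A`. -/
def basQ : Module.Basis (Fin 6) S2 QH3 := Module.Basis.ofEquivFun (EQt.symm.trans Q6.coords)

lemma basQ_coe : ⇑basQ = fun i => mk3 (chat i) := by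
  funext i
  rw [basQ, Module.Basis.coe_ofEquivFun]
  show EQt (Q6.coords.symm (Function.update (0 : Fin 6 → S2) i 1)) = mk3 (chat i)
  fin_cases i <;>
    simp +decide [Q6.coords, σq, Function.update, Fin.ext_iff]


attribute [-instance] AddMonoidAlgebra.algebra AddMonoidAlgebra.smulZeroClass AddMonoidAlgebra.distribSMul
  AddMonoidAlgebra.distribMulAction AddMonoidAlgebra.instModule

-- ============ classical side ============

abbrev Tc : Type := Q6 S2 0 0

def φc : P2 →+* Tc :=
  eval₂Hom ((Q6.ι : S2 →+* Tc).comp MvPolynomial.C)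
    ![⟨0,0,1,0,0,0⟩, ⟨0,1,0,0,0,0⟩]

lemma φc_X0 : φc (X 0) = (⟨0,0,1,0,0,0⟩ : Tc) := by simp [φc]
lemma φc_X1 : φc (X 1) = (⟨0,1,0,0,0,0⟩ : Tc) := by simp [φc]

lemma φc_r1 : φc (X 0 ^ 2 + X 1 ^ 2 - X 0 * X 1 : P2) = 0 := by
  simp only [map_sub, map_add, map_pow, map_mul, φc_X0, φc_X1]
  apply Q6.ext <;> (simp [pow_two]; try ring)

lemma φc_r2 : φc (X 0 * X 1 ^ 2 - X 0 ^ 2 * X 1 : P2) = 0 := by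
  simp only [map_sub, map_add, map_pow, map_mul, φc_X0, φc_X1]
  apply Q6.ext <;> (simp [pow_two]; try ring)

def ρc : H3 →+* Tc :=
  Ideal.Quotient.lift _ φc (by
    intro a ha
    have h : Ideal.span {(X 0 ^ 2 + X 1 ^ 2 - X 0 * X 1 : P2),
        (X 0 * X 1 ^ 2 - X 0 ^ 2 * X 1 : P2)} ≤ RingHom.ker φc := by
      rw [Ideal.span_le]
      rintro x hx
      simp only [Set.mem_insert_iff, Set.mem_singleton_iff] at hx
      rcases hx with rfl | rfl
      · exact RingHom.mem_ker.mpr φc_r1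
      · exact RingHom.mem_ker.mpr φc_r2
    exact RingHom.mem_ker.mp (h ha))

@[simp] lemma ρc_mkH (p : P2) : ρc (mkH p) = φc p := rfl

def ψc : B3 →+* Tc :=
  eval₂Hom ρc ![Q6.ι (X 0), Q6.ι (X 1)]

lemma smul_B (s : S2) (x : B3) : s • x = structMapB s * x := rfl

lemma ψc_structMapB (s : S2) : ψc (structMapB s) = Q6.ι s := by
  have : ψc.comp structMapB = (Q6.ι : S2 →+* Tc) := by
    apply MvPolynomial.ringHom_ext
    · intro a
      simp [structMapB, ψc, mkH, ρc, φc]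
    · intro i
      fin_cases i <;> simp [structMapB, ψc]
  exact RingHom.congr_fun this s

def ψlin : B3 →ₗ[S2] Tc where
  toFun := ψc
  map_add' := map_add _
  map_smul' s x := by
    simp only [RingHom.id_apply]
    rw [smul_B, map_mul, ψc_structMapB, ← Q6.smul_def]

@[simp] lemma ψlin_apply (x : B3) : ψlin x = ψc x := rfl

def σc : Tc →ₗ[S2] B3 where
  toFun t := t.x0 • cc (cpoly 0) + t.x1 • cc (cpoly 1) + t.x2 • cc (cpoly 2)
    + t.x3 • cc (cpoly 3) + t.x4 • cc (cpoly 4) + t.x5 • cc (cpoly 5)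
  map_add' x y := by
    simp only [Q6.add_x0, Q6.add_x1, Q6.add_x2, Q6.add_x3, Q6.add_x4, Q6.add_x5, add_smul]
    abel
  map_smul' s x := by
    simp only [Q6.smul_x0, Q6.smul_x1, Q6.smul_x2, Q6.smul_x3, Q6.smul_x4, Q6.smul_x5,
      RingHom.id_apply, mul_smul]
    module

lemma ψc_cc (p : P2) : ψc (cc p) = φc p := by
  rw [cc, ψc, eval₂Hom_C, ρc_mkH]

lemma ψc_cp0 : ψc (cc (cpoly 0)) = 1 := by
  rw [ψc_cc]; simp
lemma ψc_cp1 : ψc (cc (cpoly 1)) = (⟨0,1,0,0,0,0⟩ : Tc) := by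
  rw [ψc_cc]; simp [φc_X1]
lemma ψc_cp2 : ψc (cc (cpoly 2)) = (⟨0,0,1,0,0,0⟩ : Tc) := by
  rw [ψc_cc]; simp [φc_X0]
lemma ψc_cp3 : ψc (cc (cpoly 3)) = (⟨0,0,0,1,0,0⟩ : Tc) := by
  rw [ψc_cc]
  simp only [cpoly_3, map_pow, φc_X1]
  apply Q6.ext <;> (simp [pow_two]; try ring)
lemma ψc_cp4 : ψc (cc (cpoly 4)) = (⟨0,0,0,0,1,0⟩ : Tc) := by
  rw [ψc_cc]
  simp only [cpoly_4, map_mul, φc_X1, φc_X0]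
  apply Q6.ext <;> (simp; try ring)
lemma ψc_cp5 : ψc (cc (cpoly 5)) = (⟨0,0,0,0,0,1⟩ : Tc) := by
  rw [ψc_cc]
  simp only [cpoly_5, map_mul, map_pow, φc_X1, φc_X0]
  apply Q6.ext <;> (simp [pow_two]; try ring)

def Nc : Submodule S2 B3 := Submodule.span S2 (Set.range fun i : Fin 6 => cc (cpoly i))

lemma cpoly_mem (i : Fin 6) : cc (cpoly i) ∈ Nc := Submodule.subset_span ⟨i, rfl⟩

lemma cc_zero : cc 0 = 0 := by rw [cc, map_zero, map_zero]

lemma cc_sub (p q : P2) : cc (p - q) = cc p - cc q := by rw [cc, cc, cc, map_sub, map_sub]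

lemma cc_mul (p q : P2) : cc p * cc q = cc (p * q) := by
  rw [cc, cc, cc, map_mul, map_mul]

lemma mkH_eq (p c : P2) (a b : P2)
    (h : p - c = a * (X 0 ^ 2 + X 1 ^ 2 - X 0 * X 1 : P2)
      + b * (X 0 * X 1 ^ 2 - X 0 ^ 2 * X 1 : P2)) : mkH p = mkH c :=
  Ideal.Quotient.eq.mpr (h ▸ Ideal.mem_span_pair.mpr ⟨a, b, rfl⟩)

lemma cc_eq (p c : P2) (a b : P2)
    (h : p - c = a * (X 0 ^ 2 + X 1 ^ 2 - X 0 * X 1 : P2)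
      + b * (X 0 * X 1 ^ 2 - X 0 ^ 2 * X 1 : P2)) : cc p = cc c := by
  rw [cc, cc, mkH_eq p c a b h]

lemma smul_mul_c (a : S2) (x y : B3) : (a • x) * y = a • (x * y) := by
  rw [smul_B, smul_B, mul_assoc]

lemma mul_gen_mem_c (v : Fin 2) : ∀ x ∈ Nc, x * cc (X v) ∈ Nc := by
  intro x hx
  refine Submodule.span_induction ?_ ?_ ?_ ?_ hx
  · rintro y ⟨i, rfl⟩
    fin_cases v
    · -- multiplication by b₁ = X 0
      show cc (cpoly i) * cc (X 0) ∈ Nc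
      rw [cc_mul]
      fin_cases i
      · show cc (cpoly 0 * X 0) ∈ Nc
        rw [show (cpoly 0 * X 0 : P2) = cpoly 2 by simp; try ring]; exact cpoly_mem 2
      · show cc (cpoly 1 * X 0) ∈ Nc
        rw [show (cpoly 1 * X 0 : P2) = cpoly 4 by simp; try ring]; exact cpoly_mem 4
      · show cc (cpoly 2 * X 0) ∈ Nc
        rw [cc_eq (cpoly 2 * X 0) (cpoly 4 - cpoly 3) 1 0 (by simp; ring), cc_sub]
        have h := Nc.add_mem (cpoly_mem 4) (Nc.smul_mem (-1 : S2) (cpoly_mem 3))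
        rw [smul_B, map_neg, map_one] at h
        convert h using 1; ring
      · show cc (cpoly 3 * X 0) ∈ Nc
        rw [show (cpoly 3 * X 0 : P2) = cpoly 5 by simp; try ring]; exact cpoly_mem 5
      · show cc (cpoly 4 * X 0) ∈ Nc
        rw [cc_eq (cpoly 4 * X 0) (cpoly 5) 0 (-1) (by simp; ring)]
        exact cpoly_mem 5
      · show cc (cpoly 5 * X 0) ∈ Nc
        rw [cc_eq (cpoly 5 * X 0) 0 (X 0 * X 1) (X 0 - X 1) (by simp; ring), cc_zero]
        exact zero_mem _
    · -- multiplication by b₂ = X 1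
      show cc (cpoly i) * cc (X 1) ∈ Nc
      rw [cc_mul]
      fin_cases i
      · show cc (cpoly 0 * X 1) ∈ Nc
        rw [show (cpoly 0 * X 1 : P2) = cpoly 1 by simp; try ring]; exact cpoly_mem 1
      · show cc (cpoly 1 * X 1) ∈ Nc
        rw [show (cpoly 1 * X 1 : P2) = cpoly 3 by simp; try ring]; exact cpoly_mem 3
      · show cc (cpoly 2 * X 1) ∈ Nc
        rw [show (cpoly 2 * X 1 : P2) = cpoly 4 by simp; try ring]; exact cpoly_mem 4
      · show cc (cpoly 3 * X 1) ∈ Nc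
        rw [cc_eq (cpoly 3 * X 1) 0 (X 1) 1 (by simp; ring), cc_zero]
        exact zero_mem _
      · show cc (cpoly 4 * X 1) ∈ Nc
        rw [show (cpoly 4 * X 1 : P2) = cpoly 5 by simp; try ring]; exact cpoly_mem 5
      · show cc (cpoly 5 * X 1) ∈ Nc
        rw [cc_eq (cpoly 5 * X 1) 0 (X 0 * X 1) (X 0) (by simp; ring), cc_zero]
        exact zero_mem _
  · simp
  · intro a b _ _ ha hb; rw [add_mul]; exact add_mem ha hb
  · intro a y _ hy; rw [smul_mul_c]; exact Submodule.smul_mem _ _ hy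

lemma Nc_top : Nc = ⊤ := by
  rw [eq_top_iff]
  rintro x -
  induction x using MvPolynomial.induction_on with
  | C h =>
      obtain ⟨p, rfl⟩ := Ideal.Quotient.mk_surjective h
      show cc p ∈ Nc
      induction p using MvPolynomial.induction_on with
      | C a =>
          have : cc (MvPolynomial.C a) = (MvPolynomial.C a : S2) • cc (cpoly 0) := by
            rw [smul_B]
            simp [structMapB, cc]
          rw [this]
          exact Submodule.smul_mem _ _ (cpoly_mem 0)
      | add p q hp hq =>
          rw [show cc (p + q) = cc p + cc q from by rw [cc, cc, cc, map_add, map_add]]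
          exact add_mem hp hq
      | mul_X p i hp =>
          rw [show cc (p * X i) = cc p * cc (X i) from (cc_mul _ _).symm]
          fin_cases i
          · exact mul_gen_mem_c 0 _ hp
          · exact mul_gen_mem_c 1 _ hp
  | add p q hp hq => exact add_mem hp hq
  | mul_X p i hp =>
      have : p * X i = (X i : S2) • p := by
        rw [smul_B]
        simp [structMapB, mul_comm]
      rw [this]
      exact Submodule.smul_mem _ _ hp

lemma pi_sigma_c : ψlin.comp σc = LinearMap.id := by
  apply LinearMap.ext
  intro t
  simp only [LinearMap.comp_apply, LinearMap.id_apply, σc, LinearMap.coe_mk, AddHom.coe_mk,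
    map_add, map_smul, ψlin_apply, ψc_cp0, ψc_cp1, ψc_cp2, ψc_cp3, ψc_cp4, ψc_cp5]
  apply Q6.ext <;> (simp; try ring)

lemma sigma_pi_c : σc.comp ψlin = LinearMap.id := by
  apply LinearMap.ext_on (R := S2) Nc_top
  rintro _ ⟨i, rfl⟩
  show σc (ψc (cc (cpoly i))) = cc (cpoly i)
  fin_cases i
  · show σc (ψc (cc (cpoly 0))) = cc (cpoly 0); rw [ψc_cp0]
    simp only [σc, LinearMap.coe_mk, AddHom.coe_mk, Q6.one_x0, Q6.one_x1, Q6.one_x2, Q6.one_x3,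
      Q6.one_x4, Q6.one_x5, one_smul, zero_smul, add_zero, zero_add]
  · show σc (ψc (cc (cpoly 1))) = cc (cpoly 1); rw [ψc_cp1]
    simp only [σc, LinearMap.coe_mk, AddHom.coe_mk, Q6.one_x0, Q6.one_x1, Q6.one_x2, Q6.one_x3,
      Q6.one_x4, Q6.one_x5, one_smul, zero_smul, add_zero, zero_add]
  · show σc (ψc (cc (cpoly 2))) = cc (cpoly 2); rw [ψc_cp2]
    simp only [σc, LinearMap.coe_mk, AddHom.coe_mk, Q6.one_x0, Q6.one_x1, Q6.one_x2, Q6.one_x3,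
      Q6.one_x4, Q6.one_x5, one_smul, zero_smul, add_zero, zero_add]
  · show σc (ψc (cc (cpoly 3))) = cc (cpoly 3); rw [ψc_cp3]
    simp only [σc, LinearMap.coe_mk, AddHom.coe_mk, Q6.one_x0, Q6.one_x1, Q6.one_x2, Q6.one_x3,
      Q6.one_x4, Q6.one_x5, one_smul, zero_smul, add_zero, zero_add]
  · show σc (ψc (cc (cpoly 4))) = cc (cpoly 4); rw [ψc_cp4]
    simp only [σc, LinearMap.coe_mk, AddHom.coe_mk, Q6.one_x0, Q6.one_x1, Q6.one_x2, Q6.one_x3,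
      Q6.one_x4, Q6.one_x5, one_smul, zero_smul, add_zero, zero_add]
  · show σc (ψc (cc (cpoly 5))) = cc (cpoly 5); rw [ψc_cp5]
    simp only [σc, LinearMap.coe_mk, AddHom.coe_mk, Q6.one_x0, Q6.one_x1, Q6.one_x2, Q6.one_x3,
      Q6.one_x4, Q6.one_x5, one_smul, zero_smul, add_zero, zero_add]

/-- `Tc ≃ B` as `ℂ[q₁,q₂]`-modules. -/
def EQc : Tc ≃ₗ[S2] B3 := LinearEquiv.ofLinear σc ψlin sigma_pi_c pi_sigma_c

@[simp] lemma EQc_apply (t : Tc) : EQc t = σc t := rfl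
@[simp] lemma EQc_symm_apply (x : B3) : EQc.symm x = ψc x := rfl

-- ============ the evaluation map and the theorem ============

def castQC : Tq ≃ₗ[S2] Tc := (Q6.coords).trans (Q6.coords).symm

lemma castQC_apply (x : Tq) : castQC x = ⟨x.x0, x.x1, x.x2, x.x3, x.x4, x.x5⟩ := rfl

def δe : QH3 ≃ₗ[S2] B3 := EQt.symm.trans (castQC.trans EQc)

lemma δe_apply (x : QH3) : δe x = σc (castQC (πq x)) := rfl

lemma δ_chat : ∀ i : Fin 6, δe (mk3 (chat i)) = cc (cpoly i) := by
  intro i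
  fin_cases i
  · show δe (mk3 (chat 0)) = cc (cpoly 0)
    rw [δe_apply, πq_chat0, show castQC 1 = (⟨1,0,0,0,0,0⟩ : Tc) from rfl]
    simp only [σc, LinearMap.coe_mk, AddHom.coe_mk, Q6.one_x0, Q6.one_x1, Q6.one_x2, Q6.one_x3,
      Q6.one_x4, Q6.one_x5, one_smul, zero_smul, add_zero, zero_add]
  · show δe (mk3 (chat 1)) = cc (cpoly 1)
    rw [δe_apply, πq_chat1, castQC_apply]
    simp only [σc, LinearMap.coe_mk, AddHom.coe_mk, Q6.one_x0, Q6.one_x1, Q6.one_x2, Q6.one_x3,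
      Q6.one_x4, Q6.one_x5, one_smul, zero_smul, add_zero, zero_add]
  · show δe (mk3 (chat 2)) = cc (cpoly 2)
    rw [δe_apply, πq_chat2, castQC_apply]
    simp only [σc, LinearMap.coe_mk, AddHom.coe_mk, Q6.one_x0, Q6.one_x1, Q6.one_x2, Q6.one_x3,
      Q6.one_x4, Q6.one_x5, one_smul, zero_smul, add_zero, zero_add]
  · show δe (mk3 (chat 3)) = cc (cpoly 3)
    rw [δe_apply, πq_chat3, castQC_apply]
    simp only [σc, LinearMap.coe_mk, AddHom.coe_mk, Q6.one_x0, Q6.one_x1, Q6.one_x2, Q6.one_x3,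
      Q6.one_x4, Q6.one_x5, one_smul, zero_smul, add_zero, zero_add]
  · show δe (mk3 (chat 4)) = cc (cpoly 4)
    rw [δe_apply, πq_chat4, castQC_apply]
    simp only [σc, LinearMap.coe_mk, AddHom.coe_mk, Q6.one_x0, Q6.one_x1, Q6.one_x2, Q6.one_x3,
      Q6.one_x4, Q6.one_x5, one_smul, zero_smul, add_zero, zero_add]
  · show δe (mk3 (chat 5)) = cc (cpoly 5)
    rw [δe_apply, πq_chat5, castQC_apply]
    simp only [σc, LinearMap.coe_mk, AddHom.coe_mk, Q6.one_x0, Q6.one_x1, Q6.one_x2, Q6.one_x3,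
      Q6.one_x4, Q6.one_x5, one_smul, zero_smul, add_zero, zero_add]

lemma smul_cc0 : (X 1 : S2) • (cc (cpoly 0)) = (X 1 : B3) := by
  rw [smul_B]
  simp [structMapB, cc]

lemma smul_cc2 : (X 1 : S2) • (cc (cpoly 2)) = X 1 * cc (X 0) := by
  rw [smul_B]
  simp [structMapB]

lemma iiiA : δe (mk3 (X 1 ^ 2)) = cc (X 1 ^ 2) + X 1 := by
  have split : mk3 (X 1 ^ 2 : R4) = mk3 (chat 3) + (X 1 : S2) • mk3 (chat 0) := by
    rw [smul_mk3', ← map_add]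
    congr 1
    simp
    try ring
  rw [split, map_add, map_smul, δ_chat 3, δ_chat 0, smul_cc0, cpoly_3]

lemma iiiB : δe (mk3 (X 1 * X 0)) = cc (X 1 * X 0) := by
  rw [← chat_4, δ_chat 4, cpoly_4]

lemma iiiC : δe (mk3 (X 1 ^ 2 * X 0)) = cc (X 1 ^ 2 * X 0) + X 1 * cc (X 0) := by
  have split : mk3 (X 1 ^ 2 * X 0 : R4) = mk3 (chat 5) + (X 1 : S2) • mk3 (chat 2) := by
    rw [smul_mk3', ← map_add]
    congr 1
    simp
    try ring
  rw [split, map_add, map_smul, δ_chat 5, δ_chat 2, smul_cc2, cpoly_5]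

lemma symm1 : δe.symm (cc (X 1)) = mk3 (X 1) := by
  rw [show (cc (X 1) : B3) = cc (cpoly 1) from rfl, LinearEquiv.symm_apply_eq, ← chat_1,
    δ_chat 1]

lemma symm0 : δe.symm (cc (X 0)) = mk3 (X 0) := by
  rw [show (cc (X 0) : B3) = cc (cpoly 2) from rfl, LinearEquiv.symm_apply_eq, ← chat_2,
    δ_chat 2]


/-- (i) The classes of `ĉ₀, …, ĉ₅` form a `ℂ[q₁, q₂]`-basis of `A`;
(ii) the (unique) `ℂ[q₁, q₂]`-linear map `δ̂ : A → B` with `δ̂[ĉᵢ] = [[cᵢ]]` is a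
`ℂ[q₁, q₂]`-module isomorphism; (iii) `δ̂[b₂²] = [[b₂²]] + q₂`, `δ̂[b₂b₁] = [[b₂b₁]]`,
`δ̂[b₂²b₁] = [[b₂²b₁]] + q₂[[b₁]]`; consequently, for the product
`x ∘ y := δ̂(δ̂⁻¹(x) δ̂⁻¹(y))` one has `[[b₂]] ∘ [[b₂]] = [[b₂²]] + q₂`,
`[[b₂]] ∘ [[b₁]] = [[b₂b₁]]`, `[[b₂]] ∘ [[b₂]] ∘ [[b₁]] = [[b₂²b₁]] + q₂[[b₁]]`. -/
theorem quantum_evaluation_gl3 :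
    (∃ bas : Module.Basis (Fin 6) S2 QH3, ⇑bas = fun i => mk3 (chat i)) ∧
    ∃ δ : QH3 ≃ₗ[S2] B3,
      (∀ i : Fin 6, δ (mk3 (chat i)) = cc (cpoly i)) ∧
      δ (mk3 (X 1 ^ 2)) = cc (X 1 ^ 2) + X 1 ∧
      δ (mk3 (X 1 * X 0)) = cc (X 1 * X 0) ∧
      δ (mk3 (X 1 ^ 2 * X 0)) = cc (X 1 ^ 2 * X 0) + X 1 * cc (X 0) ∧
      δ (δ.symm (cc (X 1)) * δ.symm (cc (X 1))) = cc (X 1 ^ 2) + X 1 ∧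
      δ (δ.symm (cc (X 1)) * δ.symm (cc (X 0))) = cc (X 1 * X 0) ∧
      δ (δ.symm (δ (δ.symm (cc (X 1)) * δ.symm (cc (X 1)))) * δ.symm (cc (X 0))) =
        cc (X 1 ^ 2 * X 0) + X 1 * cc (X 0) := by
  refine ⟨⟨basQ, basQ_coe⟩, δe, δ_chat, iiiA, iiiB, iiiC, ?_, ?_, ?_⟩
  · rw [symm1, ← map_mul, show (X 1 * X 1 : R4) = X 1 ^ 2 by ring]
    exact iiiA
  · rw [symm1, symm0, ← map_mul]
    exact iiiB
  · rw [symm1, symm0, ← map_mul, LinearEquiv.symm_apply_apply, ← map_mul,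
      show (X 1 * X 1 * X 0 : R4) = X 1 ^ 2 * X 0 by ring]
    exact iiiC


end
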